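/- arXiv:2301.02772 — 2 statements merged into one kernel-verified Lean document; each statement's English description precedes it below -/
import Mathlib

section
/- Let R = Q[x1,x2,r,a,b,c,d]/I where I = ⟨cr − ax1, cx2 − d − bx1, rd, ax2 − br, ca − rx1, r² − a², rx2 − ab⟩. Then the images of x1, x2 form an R-regular sequence in R. -/
open MvPolynomial

/-- The polynomial ring `ℚ[x1, x2, r, a, b, c, d]`. -/
noncomputable abbrev ExP : Type := MvPolynomial (Fin 7) ℚ

-- the seven variables
noncomputable abbrev ex1 : ExP := X 0
noncomputable abbrev ex2 : ExP := X 1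
noncomputable abbrev er : ExP := X 2
noncomputable abbrev ea : ExP := X 3
noncomputable abbrev eb : ExP := X 4
noncomputable abbrev ec : ExP := X 5
noncomputable abbrev ed : ExP := X 6

/-- The ideal `I = ⟨cr − ax1, cx2 − d − bx1, rd, ax2 − br, ca − rx1, r² − a², rx2 − ab⟩`. -/
noncomputable abbrev ExI : Ideal ExP :=
  Ideal.span {ec*er - ea*ex1, ec*ex2 - ed - eb*ex1, er*ed, ea*ex2 - eb*er,
    ec*ea - er*ex1, er^2 - ea^2, er*ex2 - ea*eb}

/-- The ring `R = ℚ[x1,x2,r,a,b,c,d]/I`. -/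
noncomputable abbrev ExR : Type := ExP ⧸ ExI

namespace ExReg
lemma hG1 : ec*er - ea*ex1 ∈ ExI := Ideal.subset_span (by simp)
lemma hG2 : ec*ex2 - ed - eb*ex1 ∈ ExI := Ideal.subset_span (by simp)
lemma hG3 : er*ed ∈ ExI := Ideal.subset_span (by simp)
lemma hG4 : ea*ex2 - eb*er ∈ ExI := Ideal.subset_span (by simp)
lemma hG5 : ec*ea - er*ex1 ∈ ExI := Ideal.subset_span (by simp)
lemma hG6 : er^2 - ea^2 ∈ ExI := Ideal.subset_span (by simp)
lemma hG7 : er*ex2 - ea*eb ∈ ExI := Ideal.subset_span (by simp)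
lemma hAD : ea*ed ∈ ExI := by
  have h : ea*ed = (-ea) * (ec*ex2 - ed - eb*ex1) + ex2 * (ec*ea - er*ex1)
      + ex1 * (er*ex2 - ea*eb) := by ring
  rw [h]
  exact add_mem (add_mem (Ideal.mul_mem_left _ _ hG2) (Ideal.mul_mem_left _ _ hG5))
    (Ideal.mul_mem_left _ _ hG7)

noncomputable def s1 : Fin 7 → ExP
  | 0 => X 0 | 1 => X 1 | 2 => X 2 | 3 => X 2 | 4 => X 1 | 5 => X 0 | 6 => 0
noncomputable def s2 : Fin 7 → ExP
  | 0 => X 0 | 1 => X 1 | 2 => X 2 | 3 => -X 2 | 4 => -X 1 | 5 => -X 0 | 6 => 0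
noncomputable def s3 : Fin 7 → ExP
  | 0 => X 0 | 1 => X 1 | 2 => 0 | 3 => 0 | 4 => X 4 | 5 => X 5 | 6 => X 5 * X 1 - X 4 * X 0

noncomputable def σ1 : ExP →ₐ[ℚ] ExP := aeval s1
noncomputable def σ2 : ExP →ₐ[ℚ] ExP := aeval s2
noncomputable def σ3 : ExP →ₐ[ℚ] ExP := aeval s3

noncomputable def t1 : Fin 7 → ExP
  | 0 => X 5 | 1 => X 4 | 2 => C (1/2) * (X 3 + X 2) | 3 => 0 | 4 => 0 | 5 => 0 | 6 => 0
noncomputable def t2 : Fin 7 → ExP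
  | 0 => -X 5 | 1 => -X 4 | 2 => C (1/2) * (X 2 - X 3) | 3 => 0 | 4 => 0 | 5 => 0 | 6 => 0
noncomputable def ρ1 : ExP →ₐ[ℚ] ExP := aeval t1
noncomputable def ρ2 : ExP →ₐ[ℚ] ExP := aeval t2

noncomputable def s0 : Fin 7 → ExP
  | 0 => 0 | 1 => X 1 | 2 => X 2 | 3 => X 3 | 4 => X 4 | 5 => X 5 | 6 => X 6
noncomputable def sc : Fin 7 → ExP
  | 0 => X 0 | 1 => X 1 | 2 => X 2 | 3 => X 3 | 4 => X 4 | 5 => 0 | 6 => X 6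
noncomputable def τ0 : ExP →ₐ[ℚ] ExP := aeval s0
noncomputable def τc : ExP →ₐ[ℚ] ExP := aeval sc

noncomputable def sg : Fin 7 → ExP
  | 0 => X 5 | 1 => X 4 | 2 => X 2 | 3 => X 3 | 4 => X 4 | 5 => X 5 | 6 => X 6
noncomputable def sg' : Fin 7 → ExP
  | 0 => -X 5 | 1 => -X 4 | 2 => X 2 | 3 => X 3 | 4 => X 4 | 5 => X 5 | 6 => X 6
noncomputable def γ : ExP →ₐ[ℚ] ExP := aeval sg
noncomputable def γ' : ExP →ₐ[ℚ] ExP := aeval sg'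
lemma sub_aeval_mem (s : Fin 7 → ExP) (f : ExP) :
    f - (aeval s) f ∈ Ideal.span (Set.range fun i => (X i : ExP) - s i) := by
  induction f using MvPolynomial.induction_on with
  | C a => simp
  | add p q hp hq =>
      have h : p + q - (aeval s) (p + q) = (p - aeval s p) + (q - aeval s q) := by
        rw [map_add]; ring
      rw [h]; exact add_mem hp hq
  | mul_X p n hp =>
      have h : p * X n - (aeval s) (p * X n)
          = (p - aeval s p) * s n + p * (X n - s n) := by
        rw [map_mul, aeval_X]; ring
      rw [h]
      exact add_mem (Ideal.mul_mem_right _ _ hp)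
        (Ideal.mul_mem_left _ _ (Ideal.subset_span ⟨n, rfl⟩))

/-! U, V and multiplication lemmas -/

noncomputable def U : ExP := ea + er
noncomputable def V : ExP := ea - er

lemma lemU (h : ExP) : U * (h - γ h) ∈ ExI := by
  have hcol : Ideal.span (Set.range fun i => (X i : ExP) - sg i) ≤ ExI.colon (Ideal.span {U}) := by
    rw [Ideal.span_le]
    rintro x ⟨i, rfl⟩
    rw [SetLike.mem_coe, Ideal.mem_colon_span_singleton]
    fin_cases i
    · show (X 0 - sg 0 : ExP) * U ∈ ExI
      have e : (X 0 - sg 0 : ExP) * U = (-1) * (ec*er - ea*ex1) + (-1) * (ec*ea - er*ex1) := by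
        unfold U sg; ring
      rw [e]; exact add_mem (Ideal.mul_mem_left _ _ hG1) (Ideal.mul_mem_left _ _ hG5)
    · show (X 1 - sg 1 : ExP) * U ∈ ExI
      have e : (X 1 - sg 1 : ExP) * U = (ea*ex2 - eb*er) + (er*ex2 - ea*eb) := by
        unfold U sg; ring
      rw [e]; exact add_mem hG4 hG7
    · show (X 2 - sg 2 : ExP) * U ∈ ExI
      simp [sg]
    · show (X 3 - sg 3 : ExP) * U ∈ ExI
      simp [sg]
    · show (X 4 - sg 4 : ExP) * U ∈ ExI
      simp [sg]
    · show (X 5 - sg 5 : ExP) * U ∈ ExI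
      simp [sg]
    · show (X 6 - sg 6 : ExP) * U ∈ ExI
      simp [sg]
  have hm := hcol (sub_aeval_mem sg h)
  rw [Ideal.mem_colon_span_singleton] at hm
  rw [show U * (h - γ h) = (h - γ h) * U from by ring]
  exact hm

lemma lemV (h : ExP) : V * (h - γ' h) ∈ ExI := by
  have hcol : Ideal.span (Set.range fun i => (X i : ExP) - sg' i) ≤ ExI.colon (Ideal.span {V}) := by
    rw [Ideal.span_le]
    rintro x ⟨i, rfl⟩
    rw [SetLike.mem_coe, Ideal.mem_colon_span_singleton]
    fin_cases i
    · show (X 0 - sg' 0 : ExP) * V ∈ ExI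
      have e : (X 0 - sg' 0 : ExP) * V = (-1) * (ec*er - ea*ex1) + (ec*ea - er*ex1) := by
        unfold V sg'; ring
      rw [e]; exact add_mem (Ideal.mul_mem_left _ _ hG1) hG5
    · show (X 1 - sg' 1 : ExP) * V ∈ ExI
      have e : (X 1 - sg' 1 : ExP) * V = (ea*ex2 - eb*er) + (-1) * (er*ex2 - ea*eb) := by
        unfold V sg'; ring
      rw [e]; exact add_mem hG4 (Ideal.mul_mem_left _ _ hG7)
    · show (X 2 - sg' 2 : ExP) * V ∈ ExI
      simp [sg']
    · show (X 3 - sg' 3 : ExP) * V ∈ ExI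
      simp [sg']
    · show (X 4 - sg' 4 : ExP) * V ∈ ExI
      simp [sg']
    · show (X 5 - sg' 5 : ExP) * V ∈ ExI
      simp [sg']
    · show (X 6 - sg' 6 : ExP) * V ∈ ExI
      simp [sg']
  have hm := hcol (sub_aeval_mem sg' h)
  rw [Ideal.mem_colon_span_singleton] at hm
  rw [show V * (h - γ' h) = (h - γ' h) * V from by ring]
  exact hm

/-! subalgebras -/

noncomputable def A0 : Subalgebra ℚ ExP := Algebra.adjoin ℚ {ex1, ex2, eb, ec}
noncomputable def AU : Subalgebra ℚ ExP := Algebra.adjoin ℚ {U, eb, ec}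
noncomputable def AV : Subalgebra ℚ ExP := Algebra.adjoin ℚ {V, eb, ec}

lemma x1_mem_A0 : ex1 ∈ A0 := Algebra.subset_adjoin (by simp)
lemma x2_mem_A0 : ex2 ∈ A0 := Algebra.subset_adjoin (by simp)
lemma b_mem_A0 : eb ∈ A0 := Algebra.subset_adjoin (by simp)
lemma c_mem_A0 : ec ∈ A0 := Algebra.subset_adjoin (by simp)
lemma U_mem_AU : U ∈ AU := Algebra.subset_adjoin (by simp)
lemma b_mem_AU : eb ∈ AU := Algebra.subset_adjoin (by simp)
lemma c_mem_AU : ec ∈ AU := Algebra.subset_adjoin (by simp)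
lemma V_mem_AV : V ∈ AV := Algebra.subset_adjoin (by simp)
lemma b_mem_AV : eb ∈ AV := Algebra.subset_adjoin (by simp)
lemma c_mem_AV : ec ∈ AV := Algebra.subset_adjoin (by simp)

lemma γ_mem {g : ExP} (hg : g ∈ A0) : γ g ∈ AU ∧ γ g ∈ AV := by
  induction hg using Algebra.adjoin_induction with
  | mem x hx =>
      rcases hx with rfl | rfl | rfl | rfl
      · exact ⟨by simpa [γ, sg] using c_mem_AU, by simpa [γ, sg] using c_mem_AV⟩
      · exact ⟨by simpa [γ, sg] using b_mem_AU, by simpa [γ, sg] using b_mem_AV⟩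
      · exact ⟨by simpa [γ, sg] using b_mem_AU, by simpa [γ, sg] using b_mem_AV⟩
      · exact ⟨by simpa [γ, sg] using c_mem_AU, by simpa [γ, sg] using c_mem_AV⟩
  | algebraMap r => exact ⟨by simpa using AU.algebraMap_mem r, by simpa using AV.algebraMap_mem r⟩
  | add x y hx hy ihx ihy => exact ⟨by rw [map_add]; exact add_mem ihx.1 ihy.1,
      by rw [map_add]; exact add_mem ihx.2 ihy.2⟩
  | mul x y hx hy ihx ihy => exact ⟨by rw [map_mul]; exact mul_mem ihx.1 ihy.1,
      by rw [map_mul]; exact mul_mem ihx.2 ihy.2⟩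

lemma γ'_mem {g : ExP} (hg : g ∈ A0) : γ' g ∈ AU ∧ γ' g ∈ AV := by
  induction hg using Algebra.adjoin_induction with
  | mem x hx =>
      rcases hx with rfl | rfl | rfl | rfl
      · exact ⟨by simpa [γ', sg'] using neg_mem c_mem_AU, by simpa [γ', sg'] using neg_mem c_mem_AV⟩
      · exact ⟨by simpa [γ', sg'] using neg_mem b_mem_AU, by simpa [γ', sg'] using neg_mem b_mem_AV⟩
      · exact ⟨by simpa [γ', sg'] using b_mem_AU, by simpa [γ', sg'] using b_mem_AV⟩
      · exact ⟨by simpa [γ', sg'] using c_mem_AU, by simpa [γ', sg'] using c_mem_AV⟩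
  | algebraMap r => exact ⟨by simpa using AU.algebraMap_mem r, by simpa using AV.algebraMap_mem r⟩
  | add x y hx hy ihx ihy => exact ⟨by rw [map_add]; exact add_mem ihx.1 ihy.1,
      by rw [map_add]; exact add_mem ihx.2 ihy.2⟩
  | mul x y hx hy ihx ihy => exact ⟨by rw [map_mul]; exact mul_mem ihx.1 ihy.1,
      by rw [map_mul]; exact mul_mem ihx.2 ihy.2⟩

/-! the decomposition lemma -/

noncomputable def k : ExP := C (1/2)

lemma hk : k + k = 1 := by rw [k, ← C_add]; norm_num

lemma k_mem_AU : k ∈ AU := by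
  have : k = algebraMap ℚ ExP (1/2) := rfl
  rw [this]; exact AU.algebraMap_mem _

lemma k_mem_AV : k ∈ AV := by
  have : k = algebraMap ℚ ExP (1/2) := rfl
  rw [this]; exact AV.algebraMap_mem _

set_option maxHeartbeats 2000000 in
lemma decomp (f : ExP) :
    ∃ g p q : ExP, g ∈ A0 ∧ p ∈ AU ∧ q ∈ AV ∧ f - (g + U*p + V*q) ∈ ExI := by
  induction f using MvPolynomial.induction_on with
  | C a =>
      refine ⟨C a, 0, 0, ?_, zero_mem _, zero_mem _, ?_⟩
      · show algebraMap ℚ ExP a ∈ A0; exact A0.algebraMap_mem _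
      · have h : (C a : ExP) - (C a + U*0 + V*0) = 0 := by ring
        rw [h]; exact zero_mem _
  | add f1 f2 ih1 ih2 =>
      obtain ⟨g1, p1, q1, hg1, hp1, hq1, hf1⟩ := ih1
      obtain ⟨g2, p2, q2, hg2, hp2, hq2, hf2⟩ := ih2
      refine ⟨g1 + g2, p1 + p2, q1 + q2, add_mem hg1 hg2, add_mem hp1 hp2, add_mem hq1 hq2, ?_⟩
      have h : f1 + f2 - ((g1 + g2) + U*(p1 + p2) + V*(q1 + q2))
          = (f1 - (g1 + U*p1 + V*q1)) + (f2 - (g2 + U*p2 + V*q2)) := by ring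
      rw [h]; exact add_mem hf1 hf2
  | mul_X f n ih =>
      obtain ⟨g, p, q, hg, hp, hq, hf⟩ := ih
      fin_cases n
      · -- x1
        refine ⟨ex1*g, ec*p, -(ec*q), mul_mem x1_mem_A0 hg, mul_mem c_mem_AU hp,
          neg_mem (mul_mem c_mem_AV hq), ?_⟩
        show f * X 0 - (ex1*g + U*(ec*p) + V*(-(ec*q))) ∈ ExI
        have h : f * X 0 - (ex1*g + U*(ec*p) + V*(-(ec*q)))
            = X 0 * (f - (g + U*p + V*q)) + (-p - q)*(ec*er - ea*ex1)
              + (-p + q)*(ec*ea - er*ex1) := by unfold U V; ring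
        rw [h]
        exact add_mem (add_mem (Ideal.mul_mem_left _ _ hf) (Ideal.mul_mem_left _ _ hG1))
          (Ideal.mul_mem_left _ _ hG5)
      · -- x2
        refine ⟨ex2*g, eb*p, -(eb*q), mul_mem x2_mem_A0 hg, mul_mem b_mem_AU hp,
          neg_mem (mul_mem b_mem_AV hq), ?_⟩
        show f * X 1 - (ex2*g + U*(eb*p) + V*(-(eb*q))) ∈ ExI
        have h : f * X 1 - (ex2*g + U*(eb*p) + V*(-(eb*q)))
            = X 1 * (f - (g + U*p + V*q)) + (p + q)*(ea*ex2 - eb*er)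
              + (p - q)*(er*ex2 - ea*eb) := by unfold U V; ring
        rw [h]
        exact add_mem (add_mem (Ideal.mul_mem_left _ _ hf) (Ideal.mul_mem_left _ _ hG4))
          (Ideal.mul_mem_left _ _ hG7)
      · -- r
        refine ⟨0, k*(γ g) + k*(U*p), -(k*(γ' g)) - k*(V*q),
          zero_mem _,
          add_mem (mul_mem k_mem_AU (γ_mem hg).1) (mul_mem k_mem_AU (mul_mem U_mem_AU hp)),
          sub_mem (neg_mem (mul_mem k_mem_AV (γ'_mem hg).2))
            (mul_mem k_mem_AV (mul_mem V_mem_AV hq)), ?_⟩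
        show f * X 2 - (0 + U*(k*(γ g) + k*(U*p)) + V*(-(k*(γ' g)) - k*(V*q))) ∈ ExI
        have h : f * X 2 - (0 + U*(k*(γ g) + k*(U*p)) + V*(-(k*(γ' g)) - k*(V*q)))
            = X 2 * (f - (g + U*p + V*q)) + k*(U*(g - γ g)) - k*(V*(g - γ' g))
              + (k*p)*(er^2 - ea^2) - (k*q)*(er^2 - ea^2) := by
          unfold U V
          linear_combination (-(er*g) - er*ea*q - er*ea*p + er^2*q - er^2*p) * hk
        rw [h]
        refine sub_mem (add_mem (sub_mem (add_mem (Ideal.mul_mem_left _ _ hf)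
          (Ideal.mul_mem_left _ _ (lemU g))) (Ideal.mul_mem_left _ _ (lemV g)))
          (Ideal.mul_mem_left _ _ hG6)) (Ideal.mul_mem_left _ _ hG6)
      · -- a
        refine ⟨0, k*(γ g) + k*(U*p), k*(γ' g) + k*(V*q),
          zero_mem _,
          add_mem (mul_mem k_mem_AU (γ_mem hg).1) (mul_mem k_mem_AU (mul_mem U_mem_AU hp)),
          add_mem (mul_mem k_mem_AV (γ'_mem hg).2) (mul_mem k_mem_AV (mul_mem V_mem_AV hq)), ?_⟩
        show f * X 3 - (0 + U*(k*(γ g) + k*(U*p)) + V*(k*(γ' g) + k*(V*q))) ∈ ExI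
        have h : f * X 3 - (0 + U*(k*(γ g) + k*(U*p)) + V*(k*(γ' g) + k*(V*q)))
            = X 3 * (f - (g + U*p + V*q)) + k*(U*(g - γ g)) + k*(V*(g - γ' g))
              - (k*p)*(er^2 - ea^2) - (k*q)*(er^2 - ea^2) := by
          unfold U V
          linear_combination (-(ea*g) - ea^2*q - ea^2*p + er*ea*q - er*ea*p) * hk
        rw [h]
        refine sub_mem (sub_mem (add_mem (add_mem (Ideal.mul_mem_left _ _ hf)
          (Ideal.mul_mem_left _ _ (lemU g))) (Ideal.mul_mem_left _ _ (lemV g)))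
          (Ideal.mul_mem_left _ _ hG6)) (Ideal.mul_mem_left _ _ hG6)
      · -- b
        refine ⟨eb*g, eb*p, eb*q, mul_mem b_mem_A0 hg, mul_mem b_mem_AU hp,
          mul_mem b_mem_AV hq, ?_⟩
        show f * X 4 - (eb*g + U*(eb*p) + V*(eb*q)) ∈ ExI
        have h : f * X 4 - (eb*g + U*(eb*p) + V*(eb*q))
            = X 4 * (f - (g + U*p + V*q)) := by ring
        rw [h]; exact Ideal.mul_mem_left _ _ hf
      · -- c
        refine ⟨ec*g, ec*p, ec*q, mul_mem c_mem_A0 hg, mul_mem c_mem_AU hp,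
          mul_mem c_mem_AV hq, ?_⟩
        show f * X 5 - (ec*g + U*(ec*p) + V*(ec*q)) ∈ ExI
        have h : f * X 5 - (ec*g + U*(ec*p) + V*(ec*q))
            = X 5 * (f - (g + U*p + V*q)) := by ring
        rw [h]; exact Ideal.mul_mem_left _ _ hf
      · -- d
        refine ⟨(ec*ex2 - eb*ex1)*g, 0, 0, mul_mem (sub_mem (mul_mem c_mem_A0 x2_mem_A0)
          (mul_mem b_mem_A0 x1_mem_A0)) hg, zero_mem _, zero_mem _, ?_⟩
        show f * X 6 - ((ec*ex2 - eb*ex1)*g + U*0 + V*0) ∈ ExI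
        have h : f * X 6 - ((ec*ex2 - eb*ex1)*g + U*0 + V*0)
            = X 6 * (f - (g + U*p + V*q)) + (-g)*(ec*ex2 - ed - eb*ex1)
              + (p + q)*(ea*ed) + (p - q)*(er*ed) := by unfold U V; ring
        rw [h]
        exact add_mem (add_mem (add_mem (Ideal.mul_mem_left _ _ hf)
          (Ideal.mul_mem_left _ _ hG2)) (Ideal.mul_mem_left _ _ hAD))
          (Ideal.mul_mem_left _ _ hG3)

/-! σᵢ kill the ideal -/

lemma kill1 {f : ExP} (hf : f ∈ ExI) : σ1 f = 0 := by
  have h : ExI ≤ RingHom.ker σ1.toRingHom := by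
    rw [Ideal.span_le]
    intro x hx
    simp only [Set.mem_insert_iff, Set.mem_singleton_iff] at hx
    rw [SetLike.mem_coe, RingHom.mem_ker]
    rcases hx with rfl|rfl|rfl|rfl|rfl|rfl|rfl <;> (show σ1 _ = 0) <;> simp [σ1, s1] <;> ring
  have := h hf
  rwa [RingHom.mem_ker] at this

lemma kill2 {f : ExP} (hf : f ∈ ExI) : σ2 f = 0 := by
  have h : ExI ≤ RingHom.ker σ2.toRingHom := by
    rw [Ideal.span_le]
    intro x hx
    simp only [Set.mem_insert_iff, Set.mem_singleton_iff] at hx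
    rw [SetLike.mem_coe, RingHom.mem_ker]
    rcases hx with rfl|rfl|rfl|rfl|rfl|rfl|rfl <;> (show σ2 _ = 0) <;> simp [σ2, s2] <;> ring
  have := h hf
  rwa [RingHom.mem_ker] at this

lemma kill3 {f : ExP} (hf : f ∈ ExI) : σ3 f = 0 := by
  have h : ExI ≤ RingHom.ker σ3.toRingHom := by
    rw [Ideal.span_le]
    intro x hx
    simp only [Set.mem_insert_iff, Set.mem_singleton_iff] at hx
    rw [SetLike.mem_coe, RingHom.mem_ker]
    rcases hx with rfl|rfl|rfl|rfl|rfl|rfl|rfl <;> (show σ3 _ = 0) <;> simp [σ3, s3] <;> ring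
  have := h hf
  rwa [RingHom.mem_ker] at this

/-! fixed points and retractions -/

lemma fix3 {g : ExP} (hg : g ∈ A0) : σ3 g = g := by
  induction hg using Algebra.adjoin_induction with
  | mem x hx => rcases hx with rfl|rfl|rfl|rfl <;> simp [σ3, s3]
  | algebraMap r => simp
  | add x y hx hy ihx ihy => rw [map_add, ihx, ihy]
  | mul x y hx hy ihx ihy => rw [map_mul, ihx, ihy]

lemma ret1 {p : ExP} (hp : p ∈ AU) : ρ1 (σ1 p) = p := by
  induction hp using Algebra.adjoin_induction with
  | mem x hx =>
      rcases hx with rfl|rfl|rfl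
      · show ρ1 (σ1 U) = U
        unfold U
        rw [map_add, map_add]
        simp only [σ1, ρ1, s1, t1, aeval_X]
        show k * (X 3 + X 2) + k * (X 3 + X 2) = (X 3 + X 2 : ExP)
        linear_combination (X 3 + X 2 : ExP) * hk
      · simp [σ1, ρ1, s1, t1]
      · simp [σ1, ρ1, s1, t1]
  | algebraMap r => simp
  | add x y hx hy ihx ihy => rw [map_add, map_add, ihx, ihy]
  | mul x y hx hy ihx ihy => rw [map_mul, map_mul, ihx, ihy]

lemma ret2 {q : ExP} (hq : q ∈ AV) : ρ2 (σ2 q) = q := by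
  induction hq using Algebra.adjoin_induction with
  | mem x hx =>
      rcases hx with rfl|rfl|rfl
      · show ρ2 (σ2 V) = V
        unfold V
        rw [map_sub, map_sub]
        simp only [σ2, ρ2, s2, t2, aeval_X, map_neg]
        show -(k * (X 2 - X 3)) - k * (X 2 - X 3) = (X 3 - X 2 : ExP)
        linear_combination (X 3 - X 2 : ExP) * hk
      · simp [σ2, ρ2, s2, t2]
      · simp [σ2, ρ2, s2, t2]
  | algebraMap r => simp
  | add x y hx hy ihx ihy => rw [map_add, map_add, ihx, ihy]
  | mul x y hx hy ihx ihy => rw [map_mul, map_mul, ihx, ihy]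

/-! σ values on U, V -/

lemma σ3U : σ3 U = 0 := by unfold U; simp [σ3, s3]
lemma σ3V : σ3 V = 0 := by unfold V; simp [σ3, s3]
lemma σ1U : σ1 U = X 2 + X 2 := by unfold U; simp [σ1, s1]
lemma σ1V : σ1 V = 0 := by unfold V; simp [σ1, s1]
lemma σ2U : σ2 U = 0 := by unfold U; simp [σ2, s2]
lemma σ2V : σ2 V = -(X 2 + X 2) := by unfold V; simp [σ2, s2]; ring

/-! uniqueness -/

lemma uniq {g p q : ExP} (hg : g ∈ A0) (hp : p ∈ AU) (hq : q ∈ AV)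
    (h1 : σ1 (g + U*p + V*q) = 0) (h2 : σ2 (g + U*p + V*q) = 0)
    (h3 : σ3 (g + U*p + V*q) = 0) : g = 0 ∧ p = 0 ∧ q = 0 := by
  have hg0 : g = 0 := by
    rw [map_add, map_add, map_mul, map_mul, σ3U, σ3V, fix3 hg, zero_mul, zero_mul,
      add_zero, add_zero] at h3
    exact h3
  subst hg0
  have hp0 : p = 0 := by
    simp only [map_add, map_mul, σ1U, σ1V, map_zero, zero_mul, mul_zero, add_zero,
      zero_add] at h1
    have hx2 : (X 2 : ExP) * σ1 p = 0 := by
      linear_combination k * h1 + (-(X 2 * σ1 p)) * hk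
    have hz : σ1 p = 0 := by
      rcases mul_eq_zero.mp hx2 with h | h
      · exact absurd h (X_ne_zero 2)
      · exact h
    rw [← ret1 hp, hz, map_zero]
  subst hp0
  have hq0 : q = 0 := by
    simp only [map_add, map_mul, σ2U, σ2V, map_zero, zero_mul, mul_zero, add_zero,
      zero_add, neg_mul, neg_eq_zero] at h2
    have hx2 : (X 2 : ExP) * σ2 q = 0 := by
      linear_combination k * h2 + (-(X 2 * σ2 q)) * hk
    have hz : σ2 q = 0 := by
      rcases mul_eq_zero.mp hx2 with h | h
      · exact absurd h (X_ne_zero 2)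
      · exact h
    rw [← ret2 hq, hz, map_zero]
  exact ⟨rfl, rfl, hq0⟩

/-! the key kernel lemma -/

lemma ker_subset {f : ExP} (h1 : σ1 f = 0) (h2 : σ2 f = 0) (h3 : σ3 f = 0) : f ∈ ExI := by
  obtain ⟨g, p, q, hg, hp, hq, hw⟩ := decomp f
  have e1 : σ1 (g + U*p + V*q) = 0 := by
    have : g + U*p + V*q = f - (f - (g + U*p + V*q)) := by ring
    rw [this, map_sub, h1, kill1 hw, sub_zero]
  have e2 : σ2 (g + U*p + V*q) = 0 := by
    have : g + U*p + V*q = f - (f - (g + U*p + V*q)) := by ring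
    rw [this, map_sub, h2, kill2 hw, sub_zero]
  have e3 : σ3 (g + U*p + V*q) = 0 := by
    have : g + U*p + V*q = f - (f - (g + U*p + V*q)) := by ring
    rw [this, map_sub, h3, kill3 hw, sub_zero]
  obtain ⟨hg0, hp0, hq0⟩ := uniq hg hp hq e1 e2 e3
  have : f = f - (g + U*p + V*q) + (g + U*p + V*q) := by ring
  rw [hg0, hp0, hq0] at hw
  rw [this, hg0, hp0, hq0]
  simpa using hw

/-! step 1: x1 is a nonzerodivisor mod I -/

lemma σ1x1 : σ1 ex1 = X 0 := by simp [σ1, s1]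
lemma σ2x1 : σ2 ex1 = X 0 := by simp [σ2, s2]
lemma σ3x1 : σ3 ex1 = X 0 := by simp [σ3, s3]

lemma nzd1 {f : ExP} (hf : ex1 * f ∈ ExI) : f ∈ ExI := by
  apply ker_subset
  · have h := kill1 hf
    rw [map_mul, σ1x1] at h
    rcases mul_eq_zero.mp h with h' | h'
    · exact absurd h' (X_ne_zero 0)
    · exact h'
  · have h := kill2 hf
    rw [map_mul, σ2x1] at h
    rcases mul_eq_zero.mp h with h' | h'
    · exact absurd h' (X_ne_zero 0)
    · exact h'
  · have h := kill3 hf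
    rw [map_mul, σ3x1] at h
    rcases mul_eq_zero.mp h with h' | h'
    · exact absurd h' (X_ne_zero 0)
    · exact h'

/-! step 2: x2 is a nonzerodivisor mod I + (x1) -/

lemma span_range_s0 : Ideal.span (Set.range fun i => (X i : ExP) - s0 i)
    ≤ Ideal.span {(X 0 : ExP)} := by
  rw [Ideal.span_le]
  rintro x ⟨i, rfl⟩
  fin_cases i <;> simp [s0] <;> exact Ideal.subset_span rfl

lemma span_range_sc : Ideal.span (Set.range fun i => (X i : ExP) - sc i)
    ≤ Ideal.span {(X 5 : ExP)} := by
  rw [Ideal.span_le]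
  rintro x ⟨i, rfl⟩
  fin_cases i <;> simp [sc] <;> exact Ideal.subset_span rfl

lemma x0_dvd_of_τ0 {g : ExP} (h : τ0 g = 0) : ∃ g0, g = ex1 * g0 := by
  have hm : g ∈ Ideal.span {(X 0 : ExP)} := by
    have h2 := sub_aeval_mem s0 g
    have e : aeval s0 g = τ0 g := rfl
    rw [e, h, sub_zero] at h2
    exact span_range_s0 h2
  obtain ⟨a, ha⟩ := Ideal.mem_span_singleton'.mp hm
  exact ⟨a, by rw [← ha]; ring⟩

lemma x5_dvd_of_τc {g : ExP} (h : τc g = 0) : ∃ g0, g = ec * g0 := by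
  have hm : g ∈ Ideal.span {(X 5 : ExP)} := by
    have h2 := sub_aeval_mem sc g
    have e : aeval sc g = τc g := rfl
    rw [e, h, sub_zero] at h2
    exact span_range_sc h2
  obtain ⟨a, ha⟩ := Ideal.mem_span_singleton'.mp hm
  exact ⟨a, by rw [← ha]; ring⟩

lemma nzd2 {f h : ExP} (hfh : ex2 * f - ex1 * h ∈ ExI) :
    ∃ g' : ExP, f - ex1 * g' ∈ ExI := by
  obtain ⟨g, p, q, hg, hp, hq, hw⟩ := decomp f
  obtain ⟨g2, p2, q2, hg2, hp2, hq2, hw2⟩ := decomp h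
  -- the normal form of x2 f - x1 h is in I
  have hN : (ex2*g - ex1*g2) + U*(eb*p - ec*p2) + V*(ec*q2 - eb*q) ∈ ExI := by
    have e : (ex2*g - ex1*g2) + U*(eb*p - ec*p2) + V*(ec*q2 - eb*q)
        = (ex2*f - ex1*h) - ex2*(f - (g + U*p + V*q)) + ex1*(h - (g2 + U*p2 + V*q2))
          - (p + q)*(ea*ex2 - eb*er) - (p - q)*(er*ex2 - ea*eb)
          - (p2 + q2)*(ec*er - ea*ex1) - (p2 - q2)*(ec*ea - er*ex1) := by
      unfold U V; ring
    rw [e]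
    refine sub_mem (sub_mem (sub_mem (sub_mem (add_mem (sub_mem hfh
      (Ideal.mul_mem_left _ _ hw)) (Ideal.mul_mem_left _ _ hw2))
      (Ideal.mul_mem_left _ _ hG4)) (Ideal.mul_mem_left _ _ hG7))
      (Ideal.mul_mem_left _ _ hG1)) (Ideal.mul_mem_left _ _ hG5)
  -- so each component vanishes
  have hcomp := uniq (sub_mem (mul_mem x2_mem_A0 hg) (mul_mem x1_mem_A0 hg2))
    (sub_mem (mul_mem b_mem_AU hp) (mul_mem c_mem_AU hp2))
    (sub_mem (mul_mem c_mem_AV hq2) (mul_mem b_mem_AV hq))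
    (kill1 hN) (kill2 hN) (kill3 hN)
  obtain ⟨E0, EU, EV⟩ := hcomp
  -- extract divisibility
  have hgdvd : ∃ g0, g = ex1 * g0 := by
    apply x0_dvd_of_τ0
    have := congrArg τ0 (sub_eq_zero.mp E0)
    rw [map_mul, map_mul] at this
    have e1 : τ0 ex2 = X 1 := by simp [τ0, s0]
    have e2 : τ0 ex1 = 0 := by simp [τ0, s0]
    rw [e1, e2, zero_mul] at this
    rcases mul_eq_zero.mp this with h' | h'
    · exact absurd h' (X_ne_zero 1)
    · exact h'
  have hpdvd : ∃ p0, p = ec * p0 := by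
    apply x5_dvd_of_τc
    have := congrArg τc (sub_eq_zero.mp EU)
    rw [map_mul, map_mul] at this
    have e1 : τc eb = X 4 := by simp [τc, sc]
    have e2 : τc ec = 0 := by simp [τc, sc]
    rw [e1, e2, zero_mul] at this
    rcases mul_eq_zero.mp this with h' | h'
    · exact absurd h' (X_ne_zero 4)
    · exact h'
  have hqdvd : ∃ q0, q = ec * q0 := by
    apply x5_dvd_of_τc
    have := congrArg τc (sub_eq_zero.mp EV).symm
    rw [map_mul, map_mul] at this
    have e1 : τc eb = X 4 := by simp [τc, sc]
    have e2 : τc ec = 0 := by simp [τc, sc]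
    rw [e1, e2, zero_mul] at this
    rcases mul_eq_zero.mp this with h' | h'
    · exact absurd h' (X_ne_zero 4)
    · exact h'
  obtain ⟨g0, rfl⟩ := hgdvd
  obtain ⟨p0, rfl⟩ := hpdvd
  obtain ⟨q0, rfl⟩ := hqdvd
  refine ⟨g0 + U*p0 - V*q0, ?_⟩
  have e : f - ex1*(g0 + U*p0 - V*q0)
      = (f - (ex1*g0 + U*(ec*p0) + V*(ec*q0)))
        + (p0 - q0)*(ec*er - ea*ex1) + (p0 + q0)*(ec*ea - er*ex1) := by
    unfold U V; ring
  rw [e]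
  exact add_mem (add_mem hw (Ideal.mul_mem_left _ _ hG1)) (Ideal.mul_mem_left _ _ hG5)

/-! evaluation at 0 kills the ideal -/

lemma ev0_kill {f : ExP} (hf : f ∈ ExI) : eval (fun _ => (0:ℚ)) f = 0 := by
  have h : ExI ≤ RingHom.ker (eval (fun _ => (0:ℚ))) := by
    rw [Ideal.span_le]
    intro x hx
    simp only [Set.mem_insert_iff, Set.mem_singleton_iff] at hx
    rw [SetLike.mem_coe, RingHom.mem_ker]
    rcases hx with rfl|rfl|rfl|rfl|rfl|rfl|rfl <;> simp
  have := h hf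
  rwa [RingHom.mem_ker] at this

lemma one_sub_notmem (B C : ExP) : 1 - ex1*C - ex2*B ∉ ExI := by
  intro h
  have := ev0_kill h
  simp at this

/-! helper for smul-top membership -/

open scoped Pointwise in
lemma mem_smul_top_iff' {M : Type*} [AddCommGroup M] [Module ExR M] (r : ExR) (x : M) :
    x ∈ r • (⊤ : Submodule ExR M) ↔ ∃ y, x = r • y := by
  constructor
  · intro h
    obtain ⟨y, -, hy⟩ := Submodule.mem_map.mp h
    exact ⟨y, hy.symm⟩
  · rintro ⟨y, rfl⟩
    exact Submodule.smul_mem_pointwise_smul y r ⊤ trivial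

end ExReg

open ExReg

set_option maxHeartbeats 4000000

theorem x1_x2_isRegular :
    RingTheory.Sequence.IsRegular ExR
      [Ideal.Quotient.mk ExI ex1, Ideal.Quotient.mk ExI ex2] := by
  set y1 := Ideal.Quotient.mk ExI ex1 with hy1
  set y2 := Ideal.Quotient.mk ExI ex2 with hy2
  rw [RingTheory.Sequence.isRegular_cons_iff, RingTheory.Sequence.isRegular_cons_iff]
  refine ⟨?_, ?_, ?_⟩
  · -- y1 is regular on ExR
    intro a b hab
    obtain ⟨f, rfl⟩ := Ideal.Quotient.mk_surjective a
    obtain ⟨f', rfl⟩ := Ideal.Quotient.mk_surjective b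
    have hab' : y1 • (Ideal.Quotient.mk ExI f) = y1 • (Ideal.Quotient.mk ExI f') := hab
    rw [smul_eq_mul, smul_eq_mul, hy1, ← map_mul, ← map_mul, Ideal.Quotient.eq] at hab'
    have h1 : ex1 * (f - f') ∈ ExI := by
      have e : ex1 * (f - f') = ex1 * f - ex1 * f' := by ring
      rw [e]; exact hab'
    exact Ideal.Quotient.eq.mpr (nzd1 h1)
  · -- y2 is regular on ExR/(y1)
    intro a b hab
    obtain ⟨α, rfl⟩ := Submodule.Quotient.mk_surjective _ a
    obtain ⟨β, rfl⟩ := Submodule.Quotient.mk_surjective _ b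
    have hab' : (Submodule.Quotient.mk (y2 • α) : QuotSMulTop y1 ExR)
        = Submodule.Quotient.mk (y2 • β) := by
      rw [Submodule.Quotient.mk_smul, Submodule.Quotient.mk_smul]; exact hab
    rw [Submodule.Quotient.eq] at hab'
    obtain ⟨w, hw⟩ := (mem_smul_top_iff' y1 _).mp hab'
    obtain ⟨F, rfl⟩ := Ideal.Quotient.mk_surjective α
    obtain ⟨F', rfl⟩ := Ideal.Quotient.mk_surjective β
    obtain ⟨H, rfl⟩ := Ideal.Quotient.mk_surjective w
    have hmem : ex2 * (F - F') - ex1 * H ∈ ExI := by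
      rw [← Ideal.Quotient.eq_zero_iff_mem]
      have : y2 • (Ideal.Quotient.mk ExI F) - y2 • (Ideal.Quotient.mk ExI F')
          - y1 • (Ideal.Quotient.mk ExI H) = 0 := by
        rw [hw]; ring
      calc Ideal.Quotient.mk ExI (ex2 * (F - F') - ex1 * H)
          = y2 • (Ideal.Quotient.mk ExI F) - y2 • (Ideal.Quotient.mk ExI F')
            - y1 • (Ideal.Quotient.mk ExI H) := by
            rw [smul_eq_mul, smul_eq_mul, smul_eq_mul, hy1, hy2, ← map_mul, ← map_mul,
              ← map_mul, ← map_sub, ← map_sub]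
            congr 1
            ring
        _ = 0 := this
    obtain ⟨G', hG'⟩ := nzd2 hmem
    rw [Submodule.Quotient.eq]
    rw [mem_smul_top_iff' y1]
    refine ⟨Ideal.Quotient.mk ExI G', ?_⟩
    rw [smul_eq_mul, hy1, ← map_mul, ← map_sub, Ideal.Quotient.eq]
    exact hG'
  · -- nontriviality
    constructor
    · exact RingTheory.Sequence.IsWeaklyRegular.nil _ _
    · rw [Ideal.ofList_nil, Submodule.bot_smul]
      intro htop
      have hone : (Submodule.Quotient.mk (Submodule.Quotient.mk (1 : ExR)) :
          QuotSMulTop y2 (QuotSMulTop y1 ExR)) = 0 := by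
        have : (Submodule.Quotient.mk (Submodule.Quotient.mk (1 : ExR)) :
            QuotSMulTop y2 (QuotSMulTop y1 ExR)) ∈ (⊥ : Submodule ExR _) := by
          rw [← htop]; trivial
        simpa using this
      rw [Submodule.Quotient.mk_eq_zero] at hone
      obtain ⟨v, hv⟩ := (mem_smul_top_iff' y2 _).mp hone
      obtain ⟨β, rfl⟩ := Submodule.Quotient.mk_surjective _ v
      rw [← Submodule.Quotient.mk_smul, Submodule.Quotient.eq] at hv
      obtain ⟨c, hc⟩ := (mem_smul_top_iff' y1 _).mp hv
      obtain ⟨B, rfl⟩ := Ideal.Quotient.mk_surjective β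
      obtain ⟨Cc, rfl⟩ := Ideal.Quotient.mk_surjective c
      have hmem : 1 - ex1*Cc - ex2*B ∈ ExI := by
        rw [← Ideal.Quotient.eq_zero_iff_mem]
        have e : Ideal.Quotient.mk ExI (1 - ex1*Cc - ex2*B)
            = (1 : ExR) - y2 • (Ideal.Quotient.mk ExI B) - y1 • (Ideal.Quotient.mk ExI Cc) := by
          rw [smul_eq_mul, smul_eq_mul, hy1, hy2, ← map_mul, ← map_mul, map_sub, map_sub,
            map_one]
          ring
        rw [e, hc]
        abel
      exact one_sub_notmem B Cc hmem
end

section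
/- There exists a commutative Noetherian ring R and an element r ∈ R such that the principal ideal Rr is not a w-ideal of R; i.e., there is a GV-ideal J of R and s ∈ R with Js ⊆ Rr but s ∉ Rr. Concretely, R = Q[x1,x2,r,a,b,c,d]/⟨cr − ax1, cx2 − d − bx1, rd, ax2 − br, ca − rx1, r² − a², rx2 − ab⟩ with J generated by the images of x1, x2 works. -/
/-!
Writing `e₁ = a + r` and `e₂ = a - r`, the relations give `e₁ e₂ = 0`, `e₁ b = e₁ x₂`,
`e₁ c = e₁ x₁`, `e₂ b = -e₂ x₂`, `e₂ c = -e₂ x₁`, `e₁ d = e₂ d = 0` and `d = c x₂ - b x₁`.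
Hence every element of `ExR` is uniquely `F(x₁, x₂, b, c) + e₁ P(x₁, x₂, a) + e₂ Q(x₁, x₂, a)`
with `F, P, Q` polynomials; uniqueness is detected by three algebra maps to polynomial rings.
In these coordinates `x₁` and `x₂` act coefficientwise, so `x₁, x₂` is a regular sequence and
`(x₁, x₂)` is a GV-ideal. Finally `x₁ a = c r` and `x₂ a = b r`, while `a ∉ (r)` because the
relations are homogeneous of degree two, so `a ↦ ε` and all other generators `↦ 0` defines a
map to the dual numbers `ℚ[ε]` that kills `r` but not `a`.
-/

open MvPolynomial

/-- A finitely generated ideal `J` is a GV-ideal if the natural map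
`R → Hom_R(J, R)`, `r ↦ (j ↦ r * j)`, is an isomorphism (bijective). -/
def IsGV (R : Type*) [CommRing R] (J : Ideal R) : Prop :=
  J.FG ∧ Function.Bijective fun r : R => (LinearMap.lsmul R R r).comp J.subtype

open RingTheory.Sequence
open scoped Pointwise

theorem isWeaklyRegular_pair_iff {R : Type*} [CommRing R] (x y : R) :
    IsWeaklyRegular R [x, y] ↔
      IsSMulRegular R x ∧ ∀ u : R, y * u ∈ Ideal.span {x} → u ∈ Ideal.span {x} := by
  have hx : x • (⊤ : Submodule R R) = Ideal.span {x} := by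
    rw [← Submodule.ideal_span_singleton_smul, smul_eq_mul, Ideal.mul_top]
  rw [isWeaklyRegular_cons_iff, isWeaklyRegular_singleton_iff,
    isSMulRegular_quotient_iff_mem_of_smul_mem, hx]
  rfl

theorem isGV_span_pair_of_isWeaklyRegular {R : Type*} [CommRing R] {x y : R}
    (h : IsWeaklyRegular R [x, y]) : IsGV R (Ideal.span {x, y}) := by
  obtain ⟨hx, hy⟩ := (isWeaklyRegular_pair_iff x y).mp h
  have hxJ : x ∈ Ideal.span {x, y} := Ideal.subset_span (by simp)
  have hyJ : y ∈ Ideal.span {x, y} := Ideal.subset_span (by simp)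
  refine ⟨Submodule.fg_span (Set.toFinite _), fun t t' htt' => ?_, fun φ => ?_⟩
  · have := LinearMap.congr_fun htt' ⟨x, hxJ⟩
    exact hx (by simpa [mul_comm] using this)
  · have hswap : y * φ ⟨x, hxJ⟩ = x * φ ⟨y, hyJ⟩ := by
      rw [← smul_eq_mul, ← smul_eq_mul, ← φ.map_smul, ← φ.map_smul]
      congr 1
      exact Subtype.ext (mul_comm y x)
    obtain ⟨t, ht⟩ : ∃ t, t * x = φ ⟨x, hxJ⟩ :=
      Ideal.mem_span_singleton'.mp
        (hy _ (hswap ▸ Ideal.mul_mem_right _ _ (Ideal.mem_span_singleton_self x)))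
    have hty : t * y = φ ⟨y, hyJ⟩ := hx (by
      simp only [smul_eq_mul]
      linear_combination y * ht + hswap)
    refine ⟨t, LinearMap.ext fun ⟨j, hj⟩ => ?_⟩
    obtain ⟨p, q, rfl⟩ := Ideal.mem_span_pair.mp hj
    change t * (p * x + q * y) = φ (p • ⟨x, hxJ⟩ + q • ⟨y, hyJ⟩)
    rw [map_add, map_smul, map_smul, ← ht, ← hty, smul_eq_mul, smul_eq_mul]
    ring

theorem MvPolynomial.aeval_mem_of_mul_X_mem {R A σ : Type*} [CommSemiring R] [CommSemiring A]
    [Algebra R A] (f : MvPolynomial σ R →ₐ[R] A) {M : Submodule R A} (h1 : 1 ∈ M)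
    (hX : ∀ i, ∀ m ∈ M, m * f (X i) ∈ M) (p : MvPolynomial σ R) : f p ∈ M := by
  induction p using MvPolynomial.induction_on with
  | C s => simpa [Algebra.algebraMap_eq_smul_one] using M.smul_mem s h1
  | add p q hp hq => simpa using M.add_mem hp hq
  | mul_X p i hp => simpa using hX i _ hp

theorem MvPolynomial.mul_aeval_eq_of_mul_X_eq {R A σ : Type*} [CommSemiring R] [CommSemiring A]
    [Algebra R A] {e : A} {f g : MvPolynomial σ R →ₐ[R] A}
    (h : ∀ i, e * f (X i) = e * g (X i)) (p : MvPolynomial σ R) : e * f p = e * g p := by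
  induction p using MvPolynomial.induction_on with
  | C s => simp
  | add p q hp hq => simp [mul_add, hp, hq]
  | mul_X p i hp =>
    rw [map_mul, map_mul, ← mul_assoc, hp, mul_right_comm, h, mul_right_comm, mul_assoc]

theorem MvPolynomial.X_dvd_of_mul_X_eq {R σ : Type*} [CommRing R] [IsDomain R] {i j : σ}
    (hij : i ≠ j) {F G : MvPolynomial σ R} (h : F * X j = G * X i) : X i ∣ F :=
  (X_prime.dvd_or_dvd (h ▸ dvd_mul_left _ _)).resolve_right (X_dvd_X.not.mpr hij)

namespace ExR

noncomputable abbrev x₁ : ExR := Ideal.Quotient.mk ExI ex1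
noncomputable abbrev x₂ : ExR := Ideal.Quotient.mk ExI ex2
noncomputable abbrev r : ExR := Ideal.Quotient.mk ExI er
noncomputable abbrev a : ExR := Ideal.Quotient.mk ExI ea
noncomputable abbrev b : ExR := Ideal.Quotient.mk ExI eb
noncomputable abbrev c : ExR := Ideal.Quotient.mk ExI ec
noncomputable abbrev d : ExR := Ideal.Quotient.mk ExI ed

theorem relations : c * r = a * x₁ ∧ d = c * x₂ - b * x₁ ∧ r * d = 0 ∧ a * x₂ = b * r ∧
    c * a = r * x₁ ∧ r ^ 2 = a ^ 2 ∧ r * x₂ = a * b := by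
  have h := Ideal.span_le.mp (Ideal.mk_ker (I := ExI)).ge
  simp only [Set.insert_subset_iff, Set.singleton_subset_iff, SetLike.mem_coe, RingHom.mem_ker,
    map_sub, map_mul, map_pow, sub_eq_zero] at h
  obtain ⟨h₁, h₂, h₃, h₄, h₅, h₆, h₇⟩ := h
  exact ⟨h₁, by linear_combination -h₂, h₃, h₄, h₅, h₆, h₇⟩

theorem c_mul_r : c * r = a * x₁ := relations.1
theorem d_eq : d = c * x₂ - b * x₁ := relations.2.1
theorem r_mul_d : r * d = 0 := relations.2.2.1
theorem a_mul_x₂ : a * x₂ = b * r := relations.2.2.2.1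
theorem c_mul_a : c * a = r * x₁ := relations.2.2.2.2.1
theorem r_sq : r ^ 2 = a ^ 2 := relations.2.2.2.2.2.1
theorem r_mul_x₂ : r * x₂ = a * b := relations.2.2.2.2.2.2

noncomputable abbrev e₁ : ExR := a + r
noncomputable abbrev e₂ : ExR := a - r

theorem e₁_mul_b : e₁ * b = e₁ * x₂ := by linear_combination -a_mul_x₂ - r_mul_x₂
theorem e₂_mul_b : e₂ * b = -(e₂ * x₂) := by linear_combination a_mul_x₂ - r_mul_x₂
theorem e₁_mul_c : e₁ * c = e₁ * x₁ := by linear_combination c_mul_a + c_mul_r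
theorem e₂_mul_c : e₂ * c = -(e₂ * x₁) := by linear_combination c_mul_a - c_mul_r
theorem e₁_mul_e₁ : e₁ * e₁ = 2 * a * e₁ := by linear_combination r_sq
theorem e₂_mul_e₂ : e₂ * e₂ = 2 * a * e₂ := by linear_combination r_sq
theorem e₁_mul_e₂ : e₁ * e₂ = 0 := by linear_combination -r_sq
theorem a_mul_d : a * d = 0 := by linear_combination a * d_eq + x₂ * c_mul_a + x₁ * r_mul_x₂

noncomputable def evalXBC : MvPolynomial (Fin 4) ℚ →ₐ[ℚ] ExR := aeval ![x₁, x₂, b, c]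
noncomputable def evalXA : MvPolynomial (Fin 3) ℚ →ₐ[ℚ] ExR := aeval ![x₁, x₂, a]

@[simp]
theorem evalXBC_X (i : Fin 4) : evalXBC (X i) = ![x₁, x₂, b, c] i := aeval_X _ _

@[simp]
theorem evalXA_X (i : Fin 3) : evalXA (X i) = ![x₁, x₂, a] i := aeval_X _ _

noncomputable def substPlus : MvPolynomial (Fin 4) ℚ →ₐ[ℚ] MvPolynomial (Fin 3) ℚ :=
  aeval ![X 0, X 1, X 1, X 0]
noncomputable def substMinus : MvPolynomial (Fin 4) ℚ →ₐ[ℚ] MvPolynomial (Fin 3) ℚ :=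
  aeval ![X 0, X 1, -X 1, -X 0]

theorem e₁_mul_evalXBC (F : MvPolynomial (Fin 4) ℚ) :
    e₁ * evalXBC F = e₁ * evalXA (substPlus F) :=
  mul_aeval_eq_of_mul_X_eq (g := evalXA.comp substPlus) (fun i => by
    fin_cases i <;> simp [substPlus, e₁_mul_b, e₁_mul_c]) F

theorem e₂_mul_evalXBC (F : MvPolynomial (Fin 4) ℚ) :
    e₂ * evalXBC F = e₂ * evalXA (substMinus F) :=
  mul_aeval_eq_of_mul_X_eq (g := evalXA.comp substMinus) (fun i => by
    fin_cases i <;> simp [substMinus, e₂_mul_b, e₂_mul_c] <;> ring) F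

noncomputable def normalForm :
    MvPolynomial (Fin 4) ℚ × MvPolynomial (Fin 3) ℚ × MvPolynomial (Fin 3) ℚ →ₗ[ℚ] ExR :=
  evalXBC.toLinearMap.coprod ((LinearMap.mulLeft ℚ e₁ ∘ₗ evalXA.toLinearMap).coprod
    (LinearMap.mulLeft ℚ e₂ ∘ₗ evalXA.toLinearMap))

theorem normalForm_apply (F : MvPolynomial (Fin 4) ℚ) (P Q : MvPolynomial (Fin 3) ℚ) :
    normalForm (F, P, Q) = evalXBC F + e₁ * evalXA P + e₂ * evalXA Q := by
  simp [normalForm, add_assoc]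

section
variable (F : MvPolynomial (Fin 4) ℚ) (P Q : MvPolynomial (Fin 3) ℚ)

theorem normalForm_mul_x₁ :
    normalForm (F, P, Q) * x₁ = normalForm (F * X 0, P * X 0, Q * X 0) := by
  simp only [normalForm_apply, map_mul, evalXBC_X, evalXA_X, Matrix.cons_val]
  ring

theorem normalForm_mul_x₂ :
    normalForm (F, P, Q) * x₂ = normalForm (F * X 1, P * X 1, Q * X 1) := by
  simp only [normalForm_apply, map_mul, evalXBC_X, evalXA_X, Matrix.cons_val]
  ring

theorem normalForm_mul_b :
    normalForm (F, P, Q) * b = normalForm (F * X 2, P * X 1, -(Q * X 1)) := by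
  simp only [normalForm_apply, map_mul, map_neg, evalXBC_X, evalXA_X, Matrix.cons_val]
  linear_combination evalXA P * e₁_mul_b + evalXA Q * e₂_mul_b

theorem normalForm_mul_c :
    normalForm (F, P, Q) * c = normalForm (F * X 3, P * X 0, -(Q * X 0)) := by
  simp only [normalForm_apply, map_mul, map_neg, evalXBC_X, evalXA_X, Matrix.cons_val]
  linear_combination evalXA P * e₁_mul_c + evalXA Q * e₂_mul_c

theorem normalForm_mul_d :
    normalForm (F, P, Q) * d = normalForm (F * (X 3 * X 1 - X 2 * X 0), 0, 0) := by
  simp only [normalForm_apply, map_mul, map_sub, map_zero, evalXBC_X, Matrix.cons_val]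
  linear_combination evalXBC F * d_eq + (evalXA P + evalXA Q) * a_mul_d +
    (evalXA P - evalXA Q) * r_mul_d

theorem normalForm_mul_e₁ :
    normalForm (F, P, Q) * e₁ = normalForm (0, substPlus F + 2 * X 2 * P, 0) := by
  simp only [normalForm_apply, map_mul, map_add, map_zero, map_ofNat, evalXA_X, Matrix.cons_val]
  linear_combination e₁_mul_evalXBC F + evalXA P * e₁_mul_e₁ + evalXA Q * e₁_mul_e₂

theorem normalForm_mul_e₂ :
    normalForm (F, P, Q) * e₂ = normalForm (0, 0, substMinus F + 2 * X 2 * Q) := by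
  simp only [normalForm_apply, map_mul, map_add, map_zero, map_ofNat, evalXA_X, Matrix.cons_val]
  linear_combination e₂_mul_evalXBC F + evalXA Q * e₂_mul_e₂ + evalXA P * e₁_mul_e₂

end

theorem normalForm_surjective : Function.Surjective normalForm := by
  have h₁ : ∀ m ∈ LinearMap.range normalForm, m * e₁ ∈ LinearMap.range normalForm := by
    rintro _ ⟨⟨F, P, Q⟩, rfl⟩
    exact ⟨_, (normalForm_mul_e₁ F P Q).symm⟩
  have h₂ : ∀ m ∈ LinearMap.range normalForm, m * e₂ ∈ LinearMap.range normalForm := by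
    rintro _ ⟨⟨F, P, Q⟩, rfl⟩
    exact ⟨_, (normalForm_mul_e₂ F P Q).symm⟩
  have ha : a = (2 : ℚ)⁻¹ • (e₁ + e₂) := by
    rw [eq_inv_smul_iff₀ two_ne_zero, two_smul]; ring
  have hr : r = (2 : ℚ)⁻¹ • (e₁ - e₂) := by
    rw [eq_inv_smul_iff₀ two_ne_zero, two_smul]; ring
  intro t
  obtain ⟨p, rfl⟩ := Ideal.Quotient.mkₐ_surjective ℚ ExI t
  refine aeval_mem_of_mul_X_mem (Ideal.Quotient.mkₐ ℚ ExI) (M := LinearMap.range normalForm)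
    ⟨(1, 0, 0), by simp [normalForm_apply]⟩ (fun i m hm => ?_) p
  simp only [Ideal.Quotient.mkₐ_eq_mk]
  fin_cases i
  · obtain ⟨⟨F, P, Q⟩, rfl⟩ := hm
    exact ⟨_, (normalForm_mul_x₁ F P Q).symm⟩
  · obtain ⟨⟨F, P, Q⟩, rfl⟩ := hm
    exact ⟨_, (normalForm_mul_x₂ F P Q).symm⟩
  · change m * r ∈ _
    rw [hr, mul_smul_comm, mul_sub]
    exact Submodule.smul_mem _ _ (Submodule.sub_mem _ (h₁ m hm) (h₂ m hm))
  · change m * a ∈ _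
    rw [ha, mul_smul_comm, mul_add]
    exact Submodule.smul_mem _ _ (Submodule.add_mem _ (h₁ m hm) (h₂ m hm))
  · obtain ⟨⟨F, P, Q⟩, rfl⟩ := hm
    exact ⟨_, (normalForm_mul_b F P Q).symm⟩
  · obtain ⟨⟨F, P, Q⟩, rfl⟩ := hm
    exact ⟨_, (normalForm_mul_c F P Q).symm⟩
  · obtain ⟨⟨F, P, Q⟩, rfl⟩ := hm
    exact ⟨_, (normalForm_mul_d F P Q).symm⟩

/-- The images of `x₁, x₂, r, a, b, c, d` are `v 0, …, v 6`; `hv` lists the defining relations. -/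
noncomputable def lift {A : Type*} [CommRing A] [Algebra ℚ A] (v : Fin 7 → A)
    (hv : v 5 * v 2 = v 3 * v 0 ∧ v 6 = v 5 * v 1 - v 4 * v 0 ∧ v 2 * v 6 = 0 ∧
      v 3 * v 1 = v 4 * v 2 ∧ v 5 * v 3 = v 2 * v 0 ∧ v 2 ^ 2 = v 3 ^ 2 ∧ v 2 * v 1 = v 3 * v 4) :
    ExR →ₐ[ℚ] A :=
  Ideal.Quotient.liftₐ ExI (aeval v) fun p hp => by
    obtain ⟨h₁, h₂, h₃, h₄, h₅, h₆, h₇⟩ := hv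
    refine RingHom.mem_ker.mp ((Ideal.span_le (I := RingHom.ker (aeval v))).mpr ?_ hp)
    simp only [Set.insert_subset_iff, Set.singleton_subset_iff, SetLike.mem_coe, RingHom.mem_ker,
      map_sub, map_mul, map_pow, aeval_X]
    exact ⟨by linear_combination h₁, by linear_combination -h₂, by linear_combination h₃,
      by linear_combination h₄, by linear_combination h₅, by linear_combination h₆,
      by linear_combination h₇⟩

@[simp]
theorem lift_mk {A : Type*} [CommRing A] [Algebra ℚ A] (v : Fin 7 → A) (hv) (p : ExP) :
    lift v hv (Ideal.Quotient.mk ExI p) = aeval v p :=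
  rfl

noncomputable def projXBC : ExR →ₐ[ℚ] MvPolynomial (Fin 4) ℚ :=
  lift ![X 0, X 1, 0, 0, X 2, X 3, X 3 * X 1 - X 2 * X 0] (by simp)

noncomputable def projPlus : ExR →ₐ[ℚ] MvPolynomial (Fin 3) ℚ :=
  lift ![X 0, X 1, X 2, X 2, X 1, X 0, 0] (by simp [mul_comm])

noncomputable def projMinus : ExR →ₐ[ℚ] MvPolynomial (Fin 3) ℚ :=
  lift ![X 0, X 1, -X 2, X 2, -X 1, -X 0, 0] (by simp [mul_comm])

theorem projXBC_evalXBC (F : MvPolynomial (Fin 4) ℚ) : projXBC (evalXBC F) = F := by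
  have h : projXBC.comp evalXBC = AlgHom.id ℚ _ := by
    ext i; fin_cases i <;> simp [projXBC]
  exact AlgHom.congr_fun h F

theorem projPlus_evalXA (P : MvPolynomial (Fin 3) ℚ) : projPlus (evalXA P) = P := by
  have h : projPlus.comp evalXA = AlgHom.id ℚ _ := by
    ext i; fin_cases i <;> simp [projPlus]
  exact AlgHom.congr_fun h P

theorem projMinus_evalXA (P : MvPolynomial (Fin 3) ℚ) : projMinus (evalXA P) = P := by
  have h : projMinus.comp evalXA = AlgHom.id ℚ _ := by
    ext i; fin_cases i <;> simp [projMinus]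
  exact AlgHom.congr_fun h P

theorem projXBC_normalForm (F : MvPolynomial (Fin 4) ℚ) (P Q : MvPolynomial (Fin 3) ℚ) :
    projXBC (normalForm (F, P, Q)) = F := by
  have h₁ : projXBC e₁ = 0 := by simp [projXBC]
  have h₂ : projXBC e₂ = 0 := by simp [projXBC]
  simp only [normalForm_apply, map_add, map_mul, projXBC_evalXBC, h₁, h₂]
  ring

theorem projPlus_normalForm (P Q : MvPolynomial (Fin 3) ℚ) :
    projPlus (normalForm (0, P, Q)) = 2 * X 2 * P := by
  have h₁ : projPlus e₁ = 2 * X 2 := by simp [projPlus]; ring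
  have h₂ : projPlus e₂ = 0 := by simp [projPlus]
  simp only [normalForm_apply, map_add, map_mul, map_zero, projPlus_evalXA, h₁, h₂]
  ring

theorem projMinus_normalForm (P Q : MvPolynomial (Fin 3) ℚ) :
    projMinus (normalForm (0, P, Q)) = 2 * X 2 * Q := by
  have h₁ : projMinus e₁ = 0 := by simp [projMinus]
  have h₂ : projMinus e₂ = 2 * X 2 := by simp [projMinus]; ring
  simp only [normalForm_apply, map_add, map_mul, map_zero, projMinus_evalXA, h₁, h₂]
  ring

theorem normalForm_injective : Function.Injective normalForm := by
  refine (injective_iff_map_eq_zero normalForm).mpr fun ⟨F, P, Q⟩ h => ?_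
  obtain rfl : F = 0 := by simpa [projXBC_normalForm] using congr_arg projXBC h
  have hP := projPlus_normalForm P Q
  have hQ := projMinus_normalForm P Q
  simp_all [X_ne_zero]

theorem isSMulRegular_x₁ : IsSMulRegular ExR x₁ := by
  refine isSMulRegular_iff_right_eq_zero_of_smul.mpr fun t ht => ?_
  obtain ⟨⟨F, P, Q⟩, rfl⟩ := normalForm_surjective t
  rw [smul_eq_mul, mul_comm, normalForm_mul_x₁] at ht
  have h := normalForm_injective (ht.trans (map_zero normalForm).symm)
  simp only [Prod.mk_eq_zero, mul_eq_zero, X_ne_zero, or_false] at h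
  obtain ⟨rfl, rfl, rfl⟩ := h
  exact map_zero normalForm

theorem mem_span_x₁_of_x₂_mul_mem {u : ExR} (hu : x₂ * u ∈ Ideal.span {x₁}) :
    u ∈ Ideal.span {x₁} := by
  obtain ⟨w, hw⟩ := Ideal.mem_span_singleton'.mp hu
  obtain ⟨⟨F, P, Q⟩, rfl⟩ := normalForm_surjective u
  obtain ⟨⟨G, S, T⟩, rfl⟩ := normalForm_surjective w
  rw [normalForm_mul_x₁, mul_comm x₂, normalForm_mul_x₂, normalForm_injective.eq_iff] at hw
  simp only [Prod.mk.injEq] at hw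
  obtain ⟨hF, hP, hQ⟩ := hw
  obtain ⟨F, rfl⟩ := X_dvd_of_mul_X_eq (by decide) hF.symm
  obtain ⟨P, rfl⟩ := X_dvd_of_mul_X_eq (by decide) hP.symm
  obtain ⟨Q, rfl⟩ := X_dvd_of_mul_X_eq (by decide) hQ.symm
  refine Ideal.mem_span_singleton'.mpr ⟨normalForm (F, P, Q), ?_⟩
  rw [normalForm_mul_x₁, mul_comm F, mul_comm P, mul_comm Q]

theorem isWeaklyRegular_x₁_x₂ : IsWeaklyRegular ExR [x₁, x₂] :=
  (isWeaklyRegular_pair_iff _ _).mpr ⟨isSMulRegular_x₁, fun _ => mem_span_x₁_of_x₂_mul_mem⟩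

theorem mul_a_mem_span_r {j : ExR} (hj : j ∈ Ideal.span {x₁, x₂}) : j * a ∈ Ideal.span {r} := by
  obtain ⟨p, q, rfl⟩ := Ideal.mem_span_pair.mp hj
  exact Ideal.mem_span_singleton'.mpr
    ⟨p * c + q * b, by linear_combination p * c_mul_r - q * a_mul_x₂⟩

noncomputable def toDualNumber : ExR →ₐ[ℚ] DualNumber ℚ :=
  lift ![0, 0, 0, DualNumber.eps, 0, 0, 0] (by simp)

theorem a_notMem_span_r : a ∉ Ideal.span {r} := by
  intro h
  obtain ⟨w, hw⟩ := Ideal.mem_span_singleton'.mp h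
  simpa [toDualNumber] using congr_arg (fun z => (toDualNumber z).snd) hw

end ExR

theorem exists_noetherian_principal_not_wIdeal :
    (∃ (R : Type) (_ : CommRing R) (_ : IsNoetherianRing R) (r : R) (J : Ideal R) (s : R),
      IsGV R J ∧ (∀ j ∈ J, j * s ∈ Ideal.span {r}) ∧ s ∉ Ideal.span {r}) ∧
    (IsNoetherianRing ExR ∧
      IsGV ExR (Ideal.span {Ideal.Quotient.mk ExI ex1, Ideal.Quotient.mk ExI ex2}) ∧
      ∃ s : ExR,
        (∀ j ∈ Ideal.span {Ideal.Quotient.mk ExI ex1, Ideal.Quotient.mk ExI ex2},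
          j * s ∈ Ideal.span {Ideal.Quotient.mk ExI er}) ∧
        s ∉ Ideal.span {Ideal.Quotient.mk ExI er}) := by
  have hGV : IsGV ExR (Ideal.span {ExR.x₁, ExR.x₂}) :=
    isGV_span_pair_of_isWeaklyRegular ExR.isWeaklyRegular_x₁_x₂
  exact ⟨⟨ExR, inferInstance, inferInstance, ExR.r, _, ExR.a, hGV,
      fun _ => ExR.mul_a_mem_span_r, ExR.a_notMem_span_r⟩,
    inferInstance, hGV, ExR.a, fun _ => ExR.mul_a_mem_span_r, ExR.a_notMem_span_r⟩
end
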